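/- Let k be a number field of degree n = [k:ℚ]. There exists ε > 0 such that for all real weights x = (x_v)_v indexed by the infinite places of k with ∑_v x_v = 0 and |x_v| < ε for every v, and every nonzero f ∈ 𝒪_k, one has Q_x(f) ≥ ∑_{v real} e^{−2x_v} + 2·∑_{v complex} e^{−x_v}, with equality if and only if f is a root of unity (f^m = 1 for some integer m ≥ 1). -/

import Mathlib

open NumberField Finset
open scoped Classical

variable (k : Type*) [Field k] [NumberField k]

/-- `Q_x(f) = ∑_{v real} |f|_v² e^{-2 x_v} + 2 ∑_{v complex} |f|_v² e^{-x_v}`. -/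
noncomputable def arakelovQ (x : InfinitePlace k → ℝ) (f : k) : ℝ :=
  ∑ v : InfinitePlace k,
    if v.IsReal then (v f) ^ 2 * Real.exp (-2 * x v)
    else 2 * (v f) ^ 2 * Real.exp (-(x v))

/-!
At `x = 0` the form is `∑_v mult_v |f|_v²`. Since `log t ≤ t - 1` and
`∏_v |f|_v ^ mult_v = |N(f)| ≥ 1` for a nonzero algebraic integer, it exceeds `[k : ℚ]`
unless every `|f|_v = 1`, which by Kronecker means that `f` is a root of unity.
Only finitely many `f ∈ 𝓞_k` have all `|f|_v ≤ C`, so by continuity in `x` the strict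
inequality persists for all of them on a common neighbourhood of `0`. For `f` with some
`|f|_v > C` it holds whenever all `|x_v| ≤ 1`, provided `C` is large, because the weights
then stay in `[e⁻², 2e²]`.
-/

open Filter Topology

section
variable {K : Type*} [Field K]

noncomputable def arakelovWeight (x : InfinitePlace K → ℝ) (v : InfinitePlace K) : ℝ :=
  if v.IsReal then Real.exp (-2 * x v) else 2 * Real.exp (-(x v))

theorem arakelovWeight_zero (v : InfinitePlace K) : arakelovWeight 0 v = v.mult := by
  unfold arakelovWeight InfinitePlace.mult
  split_ifs <;> simp

theorem arakelovWeight_mem_Icc {x : InfinitePlace K → ℝ} {v : InfinitePlace K}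
    (hx : |x v| ≤ 1) : arakelovWeight x v ∈ Set.Icc (Real.exp (-2)) (2 * Real.exp 2) := by
  obtain ⟨hl, hu⟩ := abs_le.mp hx
  have h2 : Real.exp (-2) ≤ Real.exp (-(x v)) := Real.exp_le_exp.mpr (by linarith)
  have h2' : Real.exp (-(x v)) ≤ Real.exp 2 := Real.exp_le_exp.mpr (by linarith)
  unfold arakelovWeight
  split_ifs
  · constructor
    · exact Real.exp_le_exp.mpr (by linarith)
    · linarith [Real.exp_le_exp.mpr (by linarith : -2 * x v ≤ 2), Real.exp_pos 2]
  · constructor <;> linarith [Real.exp_pos (-(x v))]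

theorem NumberField.InfinitePlace.apply_eq_one_of_pow_eq_one {f : K} {m : ℕ} (hm : m ≠ 0)
    (h : f ^ m = 1) (v : InfinitePlace K) : v f = 1 :=
  (pow_eq_one_iff_of_nonneg (apply_nonneg v f) hm).mp (by rw [← map_pow, h, map_one])

variable [NumberField K]

theorem arakelovQ_eq_sum_arakelovWeight (x : InfinitePlace K → ℝ) (f : K) :
    arakelovQ K x f = ∑ v, arakelovWeight x v * v f ^ 2 := by
  refine sum_congr rfl fun v _ => ?_
  unfold arakelovWeight
  split_ifs <;> ring

theorem arakelovQ_one (x : InfinitePlace K → ℝ) :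
    arakelovQ K x 1 = ∑ v : InfinitePlace K,
      if v.IsReal then Real.exp (-2 * x v) else 2 * Real.exp (-(x v)) := by
  simp [arakelovQ]

theorem arakelovQ_eq_arakelovQ_one {f : K} (h : ∀ v : InfinitePlace K, v f = 1)
    (x : InfinitePlace K → ℝ) : arakelovQ K x f = arakelovQ K x 1 := by
  simp [arakelovQ, h]

theorem continuous_arakelovQ (f : K) : Continuous fun x => arakelovQ K x f :=
  continuous_finsetSum _ fun v _ => by split_ifs <;> fun_prop

theorem NumberField.RingOfIntegers.exists_pow_eq_one_iff_forall_place_eq_one (f : 𝓞 K) :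
    (∃ m : ℕ, 1 ≤ m ∧ f ^ m = 1) ↔ ∀ v : InfinitePlace K, v f = 1 := by
  constructor
  · rintro ⟨m, hm, h⟩
    exact InfinitePlace.apply_eq_one_of_pow_eq_one (Nat.one_le_iff_ne_zero.mp hm)
      (by exact_mod_cast congr_arg ((↑) : 𝓞 K → K) h)
  · intro h
    obtain ⟨m, hm, h⟩ := Embeddings.pow_eq_one_of_norm_eq_one K ℂ f.isIntegral_coe
      ((InfinitePlace.eq_iff_eq _ 1).mp h)
    exact ⟨m, hm, RingOfIntegers.coe_injective (by simpa using h)⟩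

theorem NumberField.RingOfIntegers.one_le_abs_norm {f : 𝓞 K} (hf : f ≠ 0) :
    (1 : ℝ) ≤ |Algebra.norm ℚ (f : K)| := by
  rw [← Algebra.coe_norm_int, ← Int.cast_one, ← Int.cast_abs, Rat.cast_intCast, Int.cast_le]
  exact Int.one_le_abs (Algebra.norm_ne_zero_iff.mpr hf)

theorem NumberField.RingOfIntegers.sum_mult_mul_log_nonneg {f : 𝓞 K} (hf : f ≠ 0) :
    0 ≤ ∑ v : InfinitePlace K, v.mult * Real.log (v f) := by
  have hf' : (f : K) ≠ 0 := RingOfIntegers.coe_ne_zero_iff.mpr hf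
  have := congr_arg Real.log (InfinitePlace.prod_eq_abs_norm (f : K))
  rw [Real.log_prod fun v _ => pow_ne_zero _ ((map_ne_zero v).mpr hf')] at this
  simp only [Real.log_pow] at this
  rw [this]
  exact Real.log_nonneg (one_le_abs_norm hf)

theorem NumberField.RingOfIntegers.finrank_lt_sum_mult_mul_sq {f : 𝓞 K} (hf : f ≠ 0)
    (h : ∃ v : InfinitePlace K, v f ≠ 1) :
    (Module.finrank ℚ K : ℝ) < ∑ v : InfinitePlace K, v.mult * v f ^ 2 := by
  have hpos (v : InfinitePlace K) : 0 < v f ^ 2 :=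
    pow_pos (InfinitePlace.pos_iff.mpr (RingOfIntegers.coe_ne_zero_iff.mpr hf)) 2
  have hlog : ∑ v : InfinitePlace K, v.mult * Real.log (v f ^ 2) <
      ∑ v : InfinitePlace K, v.mult * (v f ^ 2 - 1) := by
    obtain ⟨v₀, hv₀⟩ := h
    refine sum_lt_sum (fun v _ => ?_) ⟨v₀, mem_univ _, ?_⟩
    · gcongr
      exact Real.log_le_sub_one_of_pos (hpos v)
    · refine mul_lt_mul_of_pos_left (Real.log_lt_sub_one_of_pos (hpos v₀) fun h1 => hv₀ ?_)
        (Nat.cast_pos.mpr InfinitePlace.mult_pos)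
      exact (pow_eq_one_iff_of_nonneg (apply_nonneg _ _) two_ne_zero).mp h1
  simp only [Real.log_pow, Nat.cast_ofNat, mul_sub, sum_sub_distrib, mul_one,
    mul_left_comm _ (2 : ℝ), ← mul_sum] at hlog
  rw [← InfinitePlace.sum_mult_eq, Nat.cast_sum]
  linarith [sum_mult_mul_log_nonneg hf]

theorem NumberField.RingOfIntegers.finite_setOf_forall_place_le (r : ℝ) :
    {f : 𝓞 K | ∀ v : InfinitePlace K, v f ≤ r}.Finite :=
  ((Embeddings.finite_of_norm_le K ℂ r).preimage RingOfIntegers.coe_injective.injOn).subset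
    fun f hf => ⟨f.isIntegral_coe, (InfinitePlace.le_iff_le _ _).mp hf⟩

theorem exists_arakelovQ_one_lt_of_lt_place :
    ∃ C : ℝ, ∀ x : InfinitePlace K → ℝ, (∀ v, |x v| ≤ 1) →
      ∀ (f : K) (v₀ : InfinitePlace K), C < v₀ f → arakelovQ K x 1 < arakelovQ K x f := by
  set N : ℝ := (Fintype.card (InfinitePlace K) : ℝ)
  refine ⟨√(2 * Real.exp 4 * N), fun x hx f v₀ hf => ?_⟩
  have hw (v : InfinitePlace K) := arakelovWeight_mem_Icc (hx v)
  have hw₀ (v : InfinitePlace K) : 0 ≤ arakelovWeight x v := (Real.exp_pos _).le.trans (hw v).1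
  have hsq : 2 * Real.exp 4 * N < v₀ f ^ 2 :=
    (Real.sqrt_lt' ((Real.sqrt_nonneg _).trans_lt hf)).mp hf
  have hexp : Real.exp (-2) * Real.exp 4 = Real.exp 2 := by rw [← Real.exp_add]; norm_num
  calc arakelovQ K x 1 = ∑ v, arakelovWeight x v := by simp [arakelovQ_eq_sum_arakelovWeight]
    _ ≤ ∑ _v : InfinitePlace K, 2 * Real.exp 2 := sum_le_sum fun v _ => (hw v).2
    _ = Real.exp (-2) * (2 * Real.exp 4 * N) := by
      rw [sum_const, card_univ, nsmul_eq_mul]; linear_combination (-2 * N) * hexp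
    _ < arakelovWeight x v₀ * v₀ f ^ 2 :=
      mul_lt_mul' (hw v₀).1 hsq (by positivity) ((Real.exp_pos _).trans_le (hw v₀).1)
    _ ≤ ∑ v, arakelovWeight x v * v f ^ 2 :=
      single_le_sum (f := fun v => arakelovWeight x v * v f ^ 2)
        (fun v _ => mul_nonneg (hw₀ v) (sq_nonneg _)) (mem_univ v₀)
    _ = arakelovQ K x f := (arakelovQ_eq_sum_arakelovWeight x f).symm

theorem eventually_arakelovQ_one_lt_of_forall_place_le (r : ℝ) :
    ∀ᶠ x in 𝓝 0, ∀ f : 𝓞 K, f ≠ 0 → (∀ v : InfinitePlace K, v f ≤ r) →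
      (∃ v : InfinitePlace K, v f ≠ 1) → arakelovQ K x 1 < arakelovQ K x f := by
  have hfin : {f : 𝓞 K | f ≠ 0 ∧ (∀ v : InfinitePlace K, v f ≤ r) ∧
      ∃ v : InfinitePlace K, v f ≠ 1}.Finite :=
    (RingOfIntegers.finite_setOf_forall_place_le r).subset fun f hf => hf.2.1
  have hlt {f : 𝓞 K} (hf : f ≠ 0) (hne : ∃ v : InfinitePlace K, v f ≠ 1) :
      ∀ᶠ x in 𝓝 0, arakelovQ K x 1 < arakelovQ K x f := by
    refine (continuous_arakelovQ 1).continuousAt.eventually_lt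
      (continuous_arakelovQ _).continuousAt ?_
    have := RingOfIntegers.finrank_lt_sum_mult_mul_sq hf hne
    rw [← InfinitePlace.sum_mult_eq, Nat.cast_sum] at this
    simpa [arakelovQ_eq_sum_arakelovWeight, arakelovWeight_zero] using this
  filter_upwards [hfin.eventually_all.mpr fun f hf => hlt hf.1 hf.2.2] with x hx f hf hr hne
    using hx f ⟨hf, hr, hne⟩

theorem eventually_arakelovQ_one_lt :
    ∀ᶠ x in 𝓝 0, ∀ f : 𝓞 K, f ≠ 0 → (∃ v : InfinitePlace K, v f ≠ 1) →
      arakelovQ K x 1 < arakelovQ K x f := by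
  obtain ⟨C, hC⟩ := exists_arakelovQ_one_lt_of_lt_place (K := K)
  have hsmall : ∀ᶠ x in 𝓝 (0 : InfinitePlace K → ℝ), ∀ v, |x v| ≤ 1 :=
    eventually_all.mpr fun v => ((continuous_apply v).abs.continuousAt.eventually_lt
      continuousAt_const (by simp)).mono fun _ => le_of_lt
  filter_upwards [eventually_arakelovQ_one_lt_of_forall_place_le C, hsmall]
    with x hbdd hx f hf hne
  by_cases hr : ∀ v : InfinitePlace K, v f ≤ C
  · exact hbdd f hf hr hne
  · obtain ⟨v₀, hv₀⟩ := not_forall.mp hr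
    exact hC x hx f v₀ (lt_of_not_ge hv₀)

end

theorem arakelovQ_min_near_zero :
    ∃ ε > (0 : ℝ), ∀ x : InfinitePlace k → ℝ,
      (∑ v : InfinitePlace k, x v = 0) → (∀ v : InfinitePlace k, |x v| < ε) →
      ∀ f : 𝓞 k, f ≠ 0 →
        (∑ v : InfinitePlace k,
            if v.IsReal then Real.exp (-2 * x v) else 2 * Real.exp (-(x v)))
          ≤ arakelovQ k x (f : k) ∧
        (arakelovQ k x (f : k) =
            (∑ v : InfinitePlace k,
              if v.IsReal then Real.exp (-2 * x v) else 2 * Real.exp (-(x v))) ↔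
          ∃ m : ℕ, 1 ≤ m ∧ f ^ m = 1) := by
  obtain ⟨ε, hε, hball⟩ := Metric.eventually_nhds_iff.mp (eventually_arakelovQ_one_lt (K := k))
  refine ⟨ε, hε, fun x _ hx f hf => ?_⟩
  rw [← arakelovQ_one, RingOfIntegers.exists_pow_eq_one_iff_forall_place_eq_one]
  by_cases h : ∀ v : InfinitePlace k, v f = 1
  · simp [arakelovQ_eq_arakelovQ_one h, h]
  · have hlt :=
      hball ((dist_pi_lt_iff hε).mpr fun v => by simpa using hx v) f hf (not_forall.mp h)
    exact ⟨hlt.le, iff_of_false hlt.ne' h⟩
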